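/- The perfect recall axiom is valid on uncertainty maps: for every action symbol a and every EAL formula φ, the formula K[a]φ → [a]Kφ is true at every pointed uncertainty map. -/

import Mathlib

/-- Formulas of the epistemic action language EAL. -/
inductive EAL (P A : Type) : Type
  | top : EAL P A
  | atom : P → EAL P A
  | neg : EAL P A → EAL P A
  | and : EAL P A → EAL P A → EAL P A
  | box : A → EAL P A → EAL P A
  | know : EAL P A → EAL P A

namespace EAL
variable {P A : Type}
/-- φ ∨ ψ := ¬(¬φ ∧ ¬ψ) -/
def or (φ ψ : EAL P A) : EAL P A := neg (and (neg φ) (neg ψ))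
/-- φ → ψ := ¬φ ∨ ψ -/
def imp (φ ψ : EAL P A) : EAL P A := or (neg φ) ψ
def iff (φ ψ : EAL P A) : EAL P A := and (imp φ ψ) (imp ψ φ)
/-- ⟨a⟩φ := ¬[a]¬φ -/
def dia (a : A) (φ : EAL P A) : EAL P A := neg (box a (neg φ))
end EAL

/-- A Kripke model with labelled relations. -/
structure Kripke (P A : Type) where
  S : Type
  R : A → S → S → Prop
  V : S → P → Prop

namespace Kripke
variable {P A : Type}
/-- U|^a -/
def img (N : Kripke P A) (a : A) (U : Set N.S) : Set N.S := {t | ∃ u ∈ U, N.R a u t}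
end Kripke

/-- Semantics of EAL on an uncertainty map (Kripke model + uncertainty set). -/
def ealSat {P A : Type} (N : Kripke P A) : Set N.S → N.S → EAL P A → Prop
  | _, _, .top => True
  | _, s, .atom p => N.V s p
  | U, s, .neg φ => ¬ ealSat N U s φ
  | U, s, .and φ ψ => ealSat N U s φ ∧ ealSat N U s ψ
  | U, s, .box a φ => ∀ t, N.R a s t → ealSat N (N.img a U) t φ
  | U, _, .know φ => ∀ u ∈ U, ealSat N U u φ

/-- Validity: truth at every pointed uncertainty map. -/
def ealValid {P A : Type} (φ : EAL P A) : Prop :=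
  ∀ (N : Kripke P A) (U : Set N.S), U.Nonempty → ∀ s ∈ U, ealSat N U s φ

section
variable {P A : Type} {N : Kripke P A} {U : Set N.S} {s : N.S}

theorem ealSat_imp {φ ψ : EAL P A} :
    ealSat N U s (EAL.imp φ ψ) ↔ (ealSat N U s φ → ealSat N U s ψ) := by
  simp only [EAL.imp, EAL.or, ealSat, not_and, not_not]

theorem ealSat_know_box_iff {a : A} {φ : EAL P A} :
    ealSat N U s (EAL.know (EAL.box a φ)) ↔ ∀ t ∈ N.img a U, ealSat N (N.img a U) t φ :=
  ⟨fun h t ⟨u, hu, hut⟩ => h u hu t hut, fun h u hu t hut => h t ⟨u, hu, hut⟩⟩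

end

theorem perfect_recall_valid_general {P A : Type}
    (a : A) (φ : EAL P A) :
    ealValid (EAL.imp (EAL.know (EAL.box a φ)) (EAL.box a (EAL.know φ))) := by
  intro N U _ s _
  rw [ealSat_imp, ealSat_know_box_iff]
  intro hφ t _ u hu
  exact hφ u hu

/-- The perfect recall axiom is valid on uncertainty maps: for every
action symbol a and every EAL formula φ, K[a]φ → [a]Kφ is true at every pointed
uncertainty map. -/
theorem perfect_recall_valid {P A : Type} [Countable P] [Countable A]
    (a : A) (φ : EAL P A) :
    ealValid (EAL.imp (EAL.know (EAL.box a φ)) (EAL.box a (EAL.know φ))) :=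
  perfect_recall_valid_general a φ
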